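/- Let τ ⊂ R^d × {0} ⊂ R^{d+1} be a d-dimensional simplex (the convex hull of d+1 affinely independent points), and let η_1, η_2 be (d+1)-dimensional simplices contained in the closed half-space R^d × [0,∞) ⊂ R^{d+1}, each having τ as a face (i.e., τ is the convex hull of d+1 of the vertices of each η_i). Then the relative interiors of η_1 and η_2 intersect: η_1° ∩ η_2° ≠ ∅. -/

import Mathlib

open Module


/-- The relative interior (open simplex) of the simplex with vertices `v`: the set of
strictly positive convex combinations of the vertices. -/
def openSimplex {N m : ℕ} (v : Fin m → (Fin N → ℝ)) : Set (Fin N → ℝ) :=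
  {x | ∃ w : Fin m → ℝ, (∀ k, 0 < w k) ∧ (∑ k, w k) = 1 ∧ (∑ k, w k • v k) = x}

-- complement of an embedding Fin (d+1) ↪ Fin (d+2) is a single point
lemma exists_notin_range {d : ℕ} (s : Fin (d + 1) ↪ Fin (d + 2)) :
    ∃ j : Fin (d + 2), ∀ k, k ∉ Set.range s ↔ k = j := by
  classical
  have hcard : (Finset.univ.image s)ᶜ.card = 1 := by
    rw [Finset.card_compl, Finset.card_image_of_injective _ s.injective]
    simp
  obtain ⟨j, hj⟩ := Finset.card_eq_one.mp hcard
  refine ⟨j, fun k => ?_⟩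
  constructor
  · intro h
    have hkc : k ∈ (Finset.univ.image s)ᶜ := by
      rw [Finset.mem_compl]
      intro hk
      obtain ⟨i, -, hi⟩ := Finset.mem_image.mp hk
      exact h ⟨i, hi⟩
    rw [hj] at hkc
    simpa using hkc
  · rintro rfl ⟨i, hi⟩
    have hjc : k ∈ (Finset.univ.image s)ᶜ := by rw [hj]; exact Finset.mem_singleton_self k
    rw [Finset.mem_compl] at hjc
    exact hjc (Finset.mem_image.mpr ⟨i, Finset.mem_univ i, hi⟩)

lemma ker_proj_finrank (d : ℕ) :
    finrank ℝ (LinearMap.ker (LinearMap.proj (R := ℝ) (φ := fun _ : Fin (d + 1) => ℝ) (Fin.last d))) = d := by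
  have h := LinearMap.finrank_range_add_finrank_ker
    (LinearMap.proj (R := ℝ) (φ := fun _ : Fin (d + 1) => ℝ) (Fin.last d))
  have hsurj : Function.Surjective (LinearMap.proj (R := ℝ) (φ := fun _ : Fin (d + 1) => ℝ) (Fin.last d)) :=
    fun x => ⟨fun _ => x, rfl⟩
  rw [LinearMap.range_eq_top.2 hsurj, finrank_top] at h
  simp [Module.finrank_fintype_fun_eq_card] at h
  omega

lemma extra_pos (d : ℕ) (t : Fin (d + 1) → Fin (d + 1) → ℝ)
    (ht0 : ∀ i, t i (Fin.last d) = 0)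
    (v : Fin (d + 2) → Fin (d + 1) → ℝ) (hv : AffineIndependent ℝ v)
    (hhalf : ∀ k, 0 ≤ v k (Fin.last d))
    (s : Fin (d + 1) ↪ Fin (d + 2)) (hts : t = v ∘ s)
    (j : Fin (d + 2)) (hj : ∀ k, k ∉ Set.range s ↔ k = j) :
    0 < v j (Fin.last d) := by
  rcases (hhalf j).lt_or_eq with h | h
  · exact h
  exfalso
  have hall : ∀ k, v k (Fin.last d) = 0 := by
    intro k
    by_cases hk : k ∈ Set.range s
    · obtain ⟨i, rfl⟩ := hk
      have := ht0 i
      rw [hts] at this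
      exact this
    · rw [(hj k).mp hk]; exact h.symm
  set K := LinearMap.ker (LinearMap.proj (R := ℝ) (φ := fun _ : Fin (d + 1) => ℝ) (Fin.last d)) with hK
  have hspan : vectorSpan ℝ (Set.range v) ≤ K := by
    rw [vectorSpan_def]
    refine Submodule.span_le.2 ?_
    rintro x hx
    obtain ⟨a, ha, b, hb, rfl⟩ := hx
    obtain ⟨i, rfl⟩ := ha
    obtain ⟨i', rfl⟩ := hb
    simp only [hK, LinearMap.mem_ker, LinearMap.proj_apply, vsub_eq_sub]
    show (v i - v i') (Fin.last d) = 0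
    simp [hall i, hall i']
  have hfr : finrank ℝ (vectorSpan ℝ (Set.range v)) = d + 1 :=
    hv.finrank_vectorSpan (by simp)
  have hle := Submodule.finrank_mono hspan
  rw [hfr, ker_proj_finrank] at hle
  omega


set_option maxHeartbeats 1000000 in
/-- If `τ ⊆ ℝᵈ × {0}` is a `d`-dimensional simplex and `η₁, η₂` are
`(d+1)`-dimensional simplices contained in the half-space `ℝᵈ × [0,∞)`, both having `τ`
as a face, then the relative interiors of `η₁` and `η₂` intersect. -/
theorem openSimplex_inter_nonempty (d : ℕ)
    (t : Fin (d + 1) → (Fin (d + 1) → ℝ)) (ht : AffineIndependent ℝ t)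
    (htau : convexHull ℝ (Set.range t) ⊆ {x | x (Fin.last d) = 0})
    (v₁ v₂ : Fin (d + 2) → (Fin (d + 1) → ℝ))
    (hv₁ : AffineIndependent ℝ v₁) (hv₂ : AffineIndependent ℝ v₂)
    (hhalf₁ : convexHull ℝ (Set.range v₁) ⊆ {x | 0 ≤ x (Fin.last d)})
    (hhalf₂ : convexHull ℝ (Set.range v₂) ⊆ {x | 0 ≤ x (Fin.last d)})
    (hface₁ : ∃ s : Fin (d + 1) ↪ Fin (d + 2), t = v₁ ∘ s)
    (hface₂ : ∃ s : Fin (d + 1) ↪ Fin (d + 2), t = v₂ ∘ s) :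
    (openSimplex v₁ ∩ openSimplex v₂).Nonempty := by
  classical
  obtain ⟨s₁, hts₁⟩ := hface₁
  obtain ⟨s₂, hts₂⟩ := hface₂
  have ht0 : ∀ i, t i (Fin.last d) = 0 := fun i =>
    htau (subset_convexHull ℝ _ (Set.mem_range_self i))
  have hh₁ : ∀ k, 0 ≤ v₁ k (Fin.last d) := fun k =>
    hhalf₁ (subset_convexHull ℝ _ (Set.mem_range_self k))
  have hh₂ : ∀ k, 0 ≤ v₂ k (Fin.last d) := fun k =>
    hhalf₂ (subset_convexHull ℝ _ (Set.mem_range_self k))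
  obtain ⟨j₁, hj₁⟩ := exists_notin_range s₁
  obtain ⟨j₂, hj₂⟩ := exists_notin_range s₂
  have hpos₁ : 0 < v₁ j₁ (Fin.last d) := extra_pos d t ht0 v₁ hv₁ hh₁ s₁ hts₁ j₁ hj₁
  have hpos₂ : 0 < v₂ j₂ (Fin.last d) := extra_pos d t ht0 v₂ hv₂ hh₂ s₂ hts₂ j₂ hj₂
  -- affine basis from v₁
  have htop : affineSpan ℝ (Set.range v₁) = ⊤ := by
    rw [hv₁.affineSpan_eq_top_iff_card_eq_finrank_add_one]
    simp [Module.finrank_fintype_fun_eq_card]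
  let b : AffineBasis (Fin (d + 2)) ℝ (Fin (d + 1) → ℝ) := ⟨v₁, hv₁, htop⟩
  set a₂ := v₂ j₂ with ha₂
  set c : Fin (d + 2) → ℝ := fun k => b.coord k a₂ with hc
  have hc1 : ∑ k, c k = 1 := b.sum_coord_apply_eq_one a₂
  have hcv : ∑ k, c k • v₁ k = a₂ := by
    rw [← Finset.univ.affineCombination_eq_linear_combination v₁ c hc1]
    exact b.affineCombination_coord_eq_self a₂
  have hveq₁ : ∀ i, v₁ (s₁ i) = t i := fun i => (congrFun hts₁ i).symm
  have hveq₂ : ∀ i, v₂ (s₂ i) = t i := fun i => (congrFun hts₂ i).symm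
  have hzero₁ : ∀ k, k ≠ j₁ → v₁ k (Fin.last d) = 0 := by
    intro k hk
    have hkr : k ∈ Set.range ⇑s₁ := by
      by_contra h; exact hk ((hj₁ k).mp h)
    obtain ⟨i, rfl⟩ := hkr
    rw [hveq₁ i]; exact ht0 i
  have hlast : c j₁ * v₁ j₁ (Fin.last d) = a₂ (Fin.last d) := by
    have h := congrFun hcv (Fin.last d)
    rw [Finset.sum_apply] at h
    rw [← h, Finset.sum_eq_single j₁]
    · simp
    · intro k _ hk
      simp [hzero₁ k hk]
    · simp
  have hcj : 0 < c j₁ := by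
    have h2 : 0 < a₂ (Fin.last d) := hpos₂
    by_contra h
    push_neg at h
    nlinarith
  set M := ∑ k, |c k| with hMdef
  have hM : ∀ k, |c k| ≤ M := fun k =>
    Finset.single_le_sum (fun i _ => abs_nonneg (c i)) (Finset.mem_univ k)
  have hM0 : 0 ≤ M := Finset.sum_nonneg fun i _ => abs_nonneg (c i)
  set δ : ℝ := 1 / (2 * (M + 1)) with hδdef
  have hδ : 0 < δ := by
    rw [hδdef]; exact div_pos one_pos (by linarith)
  have hδM : ∀ k, δ * |c k| < 1 := by
    intro k
    have h1 : δ * (M + 1) = 1 / 2 := by rw [hδdef]; field_simp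
    nlinarith [hM k, abs_nonneg (c k)]
  set S : ℝ := (d + 1) + δ with hSdef
  have hS : 0 < S := by
    rw [hSdef]
    have hd : (0:ℝ) < (d:ℝ) + 1 := by positivity
    linarith
  set x : Fin (d + 1) → ℝ := S⁻¹ • ((∑ i, t i) + δ • a₂) with hx
  refine ⟨x, ?_, ?_⟩
  · -- x ∈ openSimplex v₁
    refine ⟨fun k => S⁻¹ * ((if k ∈ Finset.univ.image s₁ then 1 else 0) + δ * c k), ?_, ?_, ?_⟩
    · intro k
      apply mul_pos (inv_pos.mpr hS)
      by_cases hk : k ∈ Finset.univ.image ⇑s₁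
      · rw [if_pos hk]
        have h1 : δ * (-(|c k|)) ≤ δ * c k :=
          mul_le_mul_of_nonneg_left (neg_abs_le (c k)) hδ.le
        nlinarith [hδM k]
      · rw [if_neg hk]
        have hkr : k ∉ Set.range ⇑s₁ := by
          rintro ⟨i, hi⟩; exact hk (Finset.mem_image.mpr ⟨i, Finset.mem_univ i, hi⟩)
        have hkj : k = j₁ := (hj₁ k).mp hkr
        rw [hkj]
        have := hcj
        nlinarith
    · rw [← Finset.mul_sum]
      have hsum : ∑ k, ((if k ∈ Finset.univ.image ⇑s₁ then (1:ℝ) else 0) + δ * c k) = S := by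
        rw [Finset.sum_add_distrib, ← Finset.mul_sum, hc1]
        have himg : ∑ k, (if k ∈ Finset.univ.image ⇑s₁ then (1:ℝ) else 0) = (d + 1 : ℝ) := by
          rw [Finset.sum_ite_mem, Finset.univ_inter, Finset.sum_const,
            Finset.card_image_of_injective _ s₁.injective]
          simp
        rw [himg, hSdef]; ring
      rw [hsum, inv_mul_cancel₀ hS.ne']
    · have key : ∀ k, (S⁻¹ * ((if k ∈ Finset.univ.image ⇑s₁ then (1:ℝ) else 0) + δ * c k)) • v₁ k
          = S⁻¹ • (((if k ∈ Finset.univ.image ⇑s₁ then (1:ℝ) else 0) + δ * c k) • v₁ k) := by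
        intro k; rw [mul_smul]
      simp only [key]
      rw [← Finset.smul_sum, hx]
      congr 1
      have hsplit : ∑ k, (((if k ∈ Finset.univ.image ⇑s₁ then (1:ℝ) else 0) + δ * c k) • v₁ k)
          = (∑ k, (if k ∈ Finset.univ.image ⇑s₁ then (1:ℝ) else 0) • v₁ k)
            + ∑ k, (δ * c k) • v₁ k := by
        rw [← Finset.sum_add_distrib]
        exact Finset.sum_congr rfl fun k _ => (add_smul _ _ _)
      rw [hsplit]
      congr 1
      · simp only [ite_smul, one_smul, zero_smul]
        rw [Finset.sum_ite_mem, Finset.univ_inter,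
          Finset.sum_image (fun a _ b _ h => s₁.injective h)]
        exact Finset.sum_congr rfl fun i _ => hveq₁ i
      · simp only [mul_smul]
        rw [← Finset.smul_sum, hcv]
  · -- x ∈ openSimplex v₂
    refine ⟨fun k => S⁻¹ * ((if k ∈ Finset.univ.image s₂ then 1 else 0)
      + (if k = j₂ then δ else 0)), ?_, ?_, ?_⟩
    · intro k
      apply mul_pos (inv_pos.mpr hS)
      by_cases hk : k ∈ Finset.univ.image ⇑s₂
      · rw [if_pos hk]
        have : (0:ℝ) ≤ if k = j₂ then δ else 0 := by
          split_ifs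
          · exact hδ.le
          · exact le_refl 0
        linarith
      · rw [if_neg hk]
        have hkr : k ∉ Set.range ⇑s₂ := by
          rintro ⟨i, hi⟩; exact hk (Finset.mem_image.mpr ⟨i, Finset.mem_univ i, hi⟩)
        have hkj : k = j₂ := (hj₂ k).mp hkr
        rw [if_pos hkj]
        linarith
    · rw [← Finset.mul_sum]
      have hsum : ∑ k, ((if k ∈ Finset.univ.image ⇑s₂ then (1:ℝ) else 0)
          + (if k = j₂ then δ else 0)) = S := by
        rw [Finset.sum_add_distrib]
        have himg : ∑ k, (if k ∈ Finset.univ.image ⇑s₂ then (1:ℝ) else 0) = (d + 1 : ℝ) := by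
          rw [Finset.sum_ite_mem, Finset.univ_inter, Finset.sum_const,
            Finset.card_image_of_injective _ s₂.injective]
          simp
        have hj2 : ∑ k, (if k = j₂ then δ else 0) = δ := by
          rw [Finset.sum_ite_eq' Finset.univ j₂ fun _ => δ]
          simp
        rw [himg, hj2, hSdef]
      rw [hsum, inv_mul_cancel₀ hS.ne']
    · have key : ∀ k, (S⁻¹ * ((if k ∈ Finset.univ.image ⇑s₂ then (1:ℝ) else 0)
          + (if k = j₂ then δ else 0))) • v₂ k
          = S⁻¹ • ((((if k ∈ Finset.univ.image ⇑s₂ then (1:ℝ) else 0)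
          + (if k = j₂ then δ else 0))) • v₂ k) := by
        intro k; rw [mul_smul]
      simp only [key]
      rw [← Finset.smul_sum, hx]
      congr 1
      have hsplit : ∑ k, ((((if k ∈ Finset.univ.image ⇑s₂ then (1:ℝ) else 0)
          + (if k = j₂ then δ else 0))) • v₂ k)
          = (∑ k, (if k ∈ Finset.univ.image ⇑s₂ then (1:ℝ) else 0) • v₂ k)
            + ∑ k, (if k = j₂ then δ else 0) • v₂ k := by
        rw [← Finset.sum_add_distrib]
        exact Finset.sum_congr rfl fun k _ => (add_smul _ _ _)
      rw [hsplit]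
      congr 1
      · simp only [ite_smul, one_smul, zero_smul]
        rw [Finset.sum_ite_mem, Finset.univ_inter,
          Finset.sum_image (fun a _ b _ h => s₂.injective h)]
        exact Finset.sum_congr rfl fun i _ => hveq₂ i
      · simp only [ite_smul, zero_smul]
        rw [Finset.sum_ite_eq' Finset.univ j₂ fun k => δ • v₂ k]
        simp [ha₂]
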